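/- arXiv:gr-qc/0510051 — 3 statements merged into one kernel-verified Lean document; each statement's English description precedes it below -/
import Mathlib

section
/- For all real numbers x, y > 0, the function ρ(x,y) = xy + 1/x + 1/y - (1/2)(1/(x²y²)) - (1/2)x² - (1/2)y² satisfies ρ(x,y) ≤ 3/2, with equality if and only if x = 1 and y = 1. -/
set_option maxHeartbeats 2000000 in
theorem rho_le_three_halves_xy (x y : ℝ) (hx : 0 < x) (hy : 0 < y) :
    x * y + 1 / x + 1 / y - (1 / 2) * (1 / (x ^ 2 * y ^ 2))
      - (1 / 2) * x ^ 2 - (1 / 2) * y ^ 2 ≤ 3 / 2 ∧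
    (x * y + 1 / x + 1 / y - (1 / 2) * (1 / (x ^ 2 * y ^ 2))
      - (1 / 2) * x ^ 2 - (1 / 2) * y ^ 2 = 3 / 2 ↔ x = 1 ∧ y = 1) := by
  have hx' : x ≠ 0 := ne_of_gt hx
  have hy' : y ≠ 0 := ne_of_gt hy
  have hpos : (0:ℝ) < 2 * (x ^ 2 * y ^ 2) := by positivity
  have hid : 3 / 2 - (x * y + 1 / x + 1 / y - (1 / 2) * (1 / (x ^ 2 * y ^ 2))
      - (1 / 2) * x ^ 2 - (1 / 2) * y ^ 2)
      = (x^4*y^2 + x^2*y^4 - 2*x^3*y^3 + 3*x^2*y^2 - 2*x^2*y - 2*x*y^2 + 1)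
        / (2 * (x ^ 2 * y ^ 2)) := by
    field_simp
    ring
  have hf : 0 ≤ x^4*y^2 + x^2*y^4 - 2*x^3*y^3 + 3*x^2*y^2 - 2*x^2*y - 2*x*y^2 + 1 := by
    nlinarith [sq_nonneg (x*y*(x-y)), sq_nonneg (x*y*(x+y)-1), sq_nonneg (x*y-1),
      sq_nonneg (x-1), sq_nonneg (y-1), mul_pos hx hy, sq_nonneg (x+y-2),
      mul_pos (mul_pos hx hy) (mul_pos hx hy), sq_nonneg (x*y*x-1), sq_nonneg (x*y*y-1)]
  constructor
  · nlinarith [div_nonneg hf (le_of_lt hpos), hid]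
  · constructor
    · intro heq
      have hzero : x^4*y^2 + x^2*y^4 - 2*x^3*y^3 + 3*x^2*y^2 - 2*x^2*y - 2*x*y^2 + 1 = 0 := by
        have : (x^4*y^2 + x^2*y^4 - 2*x^3*y^3 + 3*x^2*y^2 - 2*x^2*y - 2*x*y^2 + 1)
            / (2 * (x ^ 2 * y ^ 2)) = 0 := by rw [← hid, heq]; ring
        field_simp at this
        linarith [this]
      have hsq : (x-1)^2 + (y-1)^2 ≤ 0 := by
        nlinarith [sq_nonneg (x*y*(x-y)), sq_nonneg (x*y*(x+y)-1), sq_nonneg (x*y-1),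
          sq_nonneg (x-1), sq_nonneg (y-1), mul_pos hx hy, sq_nonneg (x+y-2),
          mul_pos (mul_pos hx hy) (mul_pos hx hy), sq_nonneg (x*y*x-1), sq_nonneg (x*y*y-1)]
      constructor
      · nlinarith [sq_nonneg (x-1), sq_nonneg (y-1)]
      · nlinarith [sq_nonneg (x-1), sq_nonneg (y-1)]
    · rintro ⟨rfl, rfl⟩
      norm_num
end

section
/- For all real numbers B and C, the expression e^{2B+2C} + e^{-2B} + e^{-2C} - (1/2)e^{-(4B+4C)} - (1/2)e^{4B} - (1/2)e^{4C} is at most 3/2. -/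
theorem rho_le_three_halves (B C : ℝ) :
    Real.exp (2 * B + 2 * C) + Real.exp (-2 * B) + Real.exp (-2 * C)
      - (1 / 2) * Real.exp (-(4 * B + 4 * C))
      - (1 / 2) * Real.exp (4 * B) - (1 / 2) * Real.exp (4 * C) ≤ 3 / 2 := by
  have ha : 0 < Real.exp (2 * B) := Real.exp_pos _
  have hb : 0 < Real.exp (2 * C) := Real.exp_pos _
  set a := Real.exp (2 * B) with hA
  set b := Real.exp (2 * C) with hB
  have e1 : Real.exp (2 * B + 2 * C) = a * b := Real.exp_add _ _
  have e2 : Real.exp (-2 * B) = 1 / a := by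
    rw [show (-2 : ℝ) * B = -(2 * B) by ring, Real.exp_neg, hA, one_div]
  have e3 : Real.exp (-2 * C) = 1 / b := by
    rw [show (-2 : ℝ) * C = -(2 * C) by ring, Real.exp_neg, hB, one_div]
  have e4 : Real.exp (-(4 * B + 4 * C)) = 1 / (a ^ 2 * b ^ 2) := by
    rw [Real.exp_neg, show (4 : ℝ) * B + 4 * C = (2 * B + 2 * B) + (2 * C + 2 * C) by ring,
      Real.exp_add, Real.exp_add, Real.exp_add, hA, hB, one_div]
    ring_nf
  have e5 : Real.exp (4 * B) = a ^ 2 := by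
    rw [show (4 : ℝ) * B = 2 * B + 2 * B by ring, Real.exp_add, hA, sq]
  have e6 : Real.exp (4 * C) = b ^ 2 := by
    rw [show (4 : ℝ) * C = 2 * C + 2 * C by ring, Real.exp_add, hB, sq]
  rw [e1, e2, e3, e4, e5, e6]
  have key : a ^ 4 * b ^ 2 + a ^ 2 * b ^ 4 + 3 * a ^ 2 * b ^ 2 + 1
      ≥ 2 * a ^ 3 * b ^ 3 + 2 * a * b ^ 2 + 2 * a ^ 2 * b := by
    nlinarith [sq_nonneg (a * b - 1), sq_nonneg (a - b), sq_nonneg (a * b * (a - b)),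
      sq_nonneg (a * b * a - 1), sq_nonneg (a * b * b - 1), mul_pos ha hb,
      mul_pos (mul_pos ha hb) (mul_pos ha hb), sq_nonneg (a * b - a), sq_nonneg (a * b - b),
      mul_pos (mul_pos ha ha) hb, mul_pos (mul_pos ha hb) hb]
  rw [← sub_nonneg]
  have heq : 3 / 2 - (a * b + 1 / a + 1 / b - 1 / 2 * (1 / (a ^ 2 * b ^ 2))
        - 1 / 2 * a ^ 2 - 1 / 2 * b ^ 2)
      = (a ^ 4 * b ^ 2 + a ^ 2 * b ^ 4 + 3 * a ^ 2 * b ^ 2 + 1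
        - (2 * a ^ 3 * b ^ 3 + 2 * a * b ^ 2 + 2 * a ^ 2 * b)) / (2 * a ^ 2 * b ^ 2) := by
    field_simp
    ring
  rw [heq]
  exact div_nonneg (by linarith) (by positivity)
end

section
/- For all real B, C with (B,C) ≠ (0,0), ρ(B,C) < 3/2 strictly, where ρ(B,C) = e^{2B+2C} + e^{-2B} + e^{-2C} - (1/2)e^{-4B-4C} - (1/2)e^{4B} - (1/2)e^{4C}; consequently 1 - (2/3)ρ(B,C) ≥ 0 with equality iff B = C = 0. -/
lemma keyP (x y : ℝ) (hx : 0 < x) (hy : 0 < y) (hne : ¬(x = 1 ∧ y = 1)) :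
    0 < x^4*y^2 + x^2*y^4 + 1 + 3*x^2*y^2 - 2*x^3*y^3 - 2*x*y^2 - 2*x^2*y := by
  rcases le_or_gt 0 ((x-1)*(y-1)) with hA | hA
  · rcases eq_or_ne x y with rfl | hxy
    · have hx1 : x ≠ 1 := fun h => hne ⟨h, h⟩
      have hxx : x*x ≠ 1 := fun h => by
        rcases lt_or_gt_of_ne hx1 with h' | h' <;> nlinarith
      have h1 : 0 < (x*x-1)^2 := by
        have : x*x - 1 ≠ 0 := sub_ne_zero.mpr hxx
        positivity
      nlinarith [mul_pos hx hx, h1]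
    · have h1 : 0 < x^2*y^2*(x-y)^2 := by
        have : x - y ≠ 0 := sub_ne_zero.mpr hxy
        positivity
      nlinarith [sq_nonneg (x*y-1), h1, mul_pos hx hy]
  · have hx1 : x ≠ 1 := by rintro rfl; nlinarith
    have hy1 : y ≠ 1 := by rintro rfl; nlinarith
    have hBpos : 0 < x^2*y^2*(x-1)^2 := by
      have : x - 1 ≠ 0 := sub_ne_zero.mpr hx1
      positivity
    have hCpos : 0 < x^2*y^2*(y-1)^2 := by
      have : y - 1 ≠ 0 := sub_ne_zero.mpr hy1
      positivity
    rcases le_or_gt (x*y) 1 with hz | hz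
    · rcases lt_or_gt_of_ne hx1 with hxlt | hxgt
      · have hygt : 1 < y := by nlinarith
        have ht : (0:ℝ) ≤ x^2*y*((y-1)*(1-x*y)) :=
          mul_nonneg (by positivity) (mul_nonneg (by linarith) (by linarith))
        nlinarith [sq_nonneg (x*y^2-1), hBpos, ht]
      · have hylt : y < 1 := by nlinarith
        have ht : (0:ℝ) ≤ x*y^2*((x-1)*(1-x*y)) :=
          mul_nonneg (by positivity) (mul_nonneg (by linarith) (by linarith))
        nlinarith [sq_nonneg (x^2*y-1), hCpos, ht]
    · rcases lt_or_gt_of_ne hx1 with hxlt | hxgt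
      · have ht : (0:ℝ) ≤ x*y^2*((x-1)*(1-x*y)) :=
          mul_nonneg (by positivity) (by nlinarith)
        nlinarith [sq_nonneg (x^2*y-1), hCpos, ht]
      · have hylt : y < 1 := by nlinarith
        have ht : (0:ℝ) ≤ x^2*y*((y-1)*(1-x*y)) :=
          mul_nonneg (by positivity) (by nlinarith)
        nlinarith [sq_nonneg (x*y^2-1), hBpos, ht]

lemma rho_lt_aux (B C : ℝ) (h : ¬(B = 0 ∧ C = 0)) :
    Real.exp (2 * B + 2 * C) + Real.exp (-(2 * B)) + Real.exp (-(2 * C))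
      - (1 / 2) * Real.exp (-(4 * B) - 4 * C)
      - (1 / 2) * Real.exp (4 * B) - (1 / 2) * Real.exp (4 * C) < 3 / 2 := by
  set x := Real.exp (2 * B) with hxdef
  set y := Real.exp (2 * C) with hydef
  have hx : 0 < x := Real.exp_pos _
  have hy : 0 < y := Real.exp_pos _
  have hne : ¬(x = 1 ∧ y = 1) := by
    rintro ⟨h1, h2⟩
    rw [hxdef, ← Real.exp_zero] at h1
    rw [hydef, ← Real.exp_zero] at h2
    have hB : 2 * B = 0 := Real.exp_injective h1
    have hC : 2 * C = 0 := Real.exp_injective h2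
    exact h ⟨by linarith, by linarith⟩
  have e1 : Real.exp (2 * B + 2 * C) = x * y := Real.exp_add _ _
  have e2 : Real.exp (-(2 * B)) = x⁻¹ := Real.exp_neg _
  have e3 : Real.exp (-(2 * C)) = y⁻¹ := Real.exp_neg _
  have e4 : Real.exp (-(4 * B) - 4 * C) = (x * y)⁻¹ * (x * y)⁻¹ := by
    rw [show -(4 * B) - 4 * C = -(2 * B + 2 * C) + -(2 * B + 2 * C) by ring,
      Real.exp_add, Real.exp_neg, Real.exp_add]
  have e5 : Real.exp (4 * B) = x * x := by
    rw [show (4:ℝ) * B = 2 * B + 2 * B by ring, Real.exp_add]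
  have e6 : Real.exp (4 * C) = y * y := by
    rw [show (4:ℝ) * C = 2 * C + 2 * C by ring, Real.exp_add]
  rw [e1, e2, e3, e4, e5, e6]
  have hP := keyP x y hx hy hne
  have hx' : x ≠ 0 := ne_of_gt hx
  have hy' : y ≠ 0 := ne_of_gt hy
  rw [show x * y + x⁻¹ + y⁻¹ - 1 / 2 * ((x * y)⁻¹ * (x * y)⁻¹) - 1 / 2 * (x * x)
      - 1 / 2 * (y * y) = 3/2 - (x^4*y^2 + x^2*y^4 + 1 + 3*x^2*y^2 - 2*x^3*y^3
      - 2*x*y^2 - 2*x^2*y) / (2 * x^2 * y^2) by field_simp; ring]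
  have hden : 0 < 2 * x^2 * y^2 := by positivity
  have : 0 < (x^4*y^2 + x^2*y^4 + 1 + 3*x^2*y^2 - 2*x^3*y^3 - 2*x*y^2 - 2*x^2*y)
      / (2 * x^2 * y^2) := div_pos hP hden
  linarith

theorem rho_strictly_less_three_halves (B C : ℝ) :
    ((B, C) ≠ ((0 : ℝ), (0 : ℝ)) →
      Real.exp (2 * B + 2 * C) + Real.exp (-(2 * B)) + Real.exp (-(2 * C))
        - (1 / 2) * Real.exp (-(4 * B) - 4 * C)
        - (1 / 2) * Real.exp (4 * B) - (1 / 2) * Real.exp (4 * C) < 3 / 2) ∧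
    0 ≤ 1 - (2 / 3) * (Real.exp (2 * B + 2 * C) + Real.exp (-(2 * B)) + Real.exp (-(2 * C))
        - (1 / 2) * Real.exp (-(4 * B) - 4 * C)
        - (1 / 2) * Real.exp (4 * B) - (1 / 2) * Real.exp (4 * C)) ∧
    (1 - (2 / 3) * (Real.exp (2 * B + 2 * C) + Real.exp (-(2 * B)) + Real.exp (-(2 * C))
        - (1 / 2) * Real.exp (-(4 * B) - 4 * C)
        - (1 / 2) * Real.exp (4 * B) - (1 / 2) * Real.exp (4 * C)) = 0
      ↔ B = 0 ∧ C = 0) := by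
  have heq0 : ∀ (h : B = 0 ∧ C = 0),
      Real.exp (2 * B + 2 * C) + Real.exp (-(2 * B)) + Real.exp (-(2 * C))
        - (1 / 2) * Real.exp (-(4 * B) - 4 * C)
        - (1 / 2) * Real.exp (4 * B) - (1 / 2) * Real.exp (4 * C) = 3 / 2 := by
    rintro ⟨rfl, rfl⟩
    norm_num [Real.exp_zero]
  refine ⟨fun h => rho_lt_aux B C (by simpa [Prod.ext_iff] using h), ?_, ?_⟩
  · by_cases h : B = 0 ∧ C = 0
    · rw [heq0 h]; norm_num
    · have := rho_lt_aux B C h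
      linarith
  · constructor
    · intro h0
      by_contra h
      have := rho_lt_aux B C h
      linarith
    · intro h
      rw [heq0 h]
      norm_num
end
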